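/- Suppose the minimal automaton of a regular language L contains the forbidden configuration: states f ≠ g ≠ h and words x, y with f∘x = g, g∘x = g, and g∘y = h. Then there exist words p, u, v, w and a state K (a left quotient of L) such that K∘(p^ω u) ∪ (K∘(p^ω v) ∩ K∘w) ≠ K∘(p^ω u) ∪ (K∘(p^ω w) ∩ K∘v), where p^ω is an idempotent power of p on the finite state set. -/

import Mathlib

/-!
Let `e = x^m` be an idempotent power of `x`. Since `f∘x = g∘x = g`, also `f∘e = g`, so with
`K = f` every `K∘(e a)` equals `g∘a`. Evaluating both sides of the identity at the empty word
turns it into `u ∈ g ∨ (v ∈ g ∧ w ∈ f) ↔ u ∈ g ∨ (w ∈ g ∧ v ∈ f)`. Because `g ≠ g∘y`, the state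
`g` is neither `∅` nor everything, so we may pick `u ∉ g`; a word `a` separating `f` from `g` then
gives `v`, `w` violating the equivalence.
-/

def leftQuot {A : Type*} (u : List A) (L : Set (List A)) : Set (List A) :=
  {w | u ++ w ∈ L}

def wpow {A : Type*} (p : List A) (m : ℕ) : List A := (List.replicate m p).flatten

theorem exists_pos_isIdempotentElem_pow {M : Type*} [Monoid M] [Finite M] (a : M) :
    ∃ m, 0 < m ∧ IsIdempotentElem (a ^ m) := by
  obtain ⟨i, j, hij, hpow⟩ := Set.finite_univ.exists_lt_map_eq_of_forall_mem
    (f := (a ^ · : ℕ → M)) fun _ => Set.mem_univ _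
  obtain ⟨d, rfl⟩ := Nat.exists_eq_add_of_lt hij
  have hper : ∀ t, a ^ (i + (d + 1) * t) = a ^ i := by
    intro t
    induction t with
    | zero => simp
    | succ t ih => rw [Nat.mul_succ, ← add_assoc, pow_add, ih, ← pow_add, ← add_assoc, ← hpow]
  -- `n ↦ a ^ n` has period `d + 1` from `i` on; take a multiple of the period beyond `i`.
  have hi : i ≤ (d + 1) * (i + 1) := by nlinarith
  refine ⟨(d + 1) * (i + 1), by positivity, ?_⟩
  calc a ^ ((d + 1) * (i + 1)) * a ^ ((d + 1) * (i + 1))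
      = a ^ ((d + 1) * (i + 1) - i) * a ^ (i + (d + 1) * (i + 1)) := by
        rw [← pow_add, ← pow_add]; congr 1; omega
    _ = a ^ ((d + 1) * (i + 1)) := by
        rw [hper, ← pow_add]; congr 1; omega

theorem Set.MapsTo.exists_pos_iterate_idempotent {α : Type*} {f : α → α} {s : Set α}
    (hf : Set.MapsTo f s s) (hs : s.Finite) :
    ∃ m, 0 < m ∧ ∀ a ∈ s, f^[m] (f^[m] a) = f^[m] a := by
  have := hs.to_subtype
  have : Finite (Function.End s) := inferInstanceAs (Finite (s → s))
  obtain ⟨m, hm, hidem⟩ :=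
    exists_pos_isIdempotentElem_pow (show Function.End s from hf.restrict f s s)
  refine ⟨m, hm, fun a ha => ?_⟩
  have h : (hf.restrict f s s)^[m] ((hf.restrict f s s)^[m] ⟨a, ha⟩) =
      (hf.restrict f s s)^[m] ⟨a, ha⟩ := congr_fun hidem ⟨a, ha⟩
  simpa only [Set.MapsTo.coe_iterate_restrict] using congr_arg Subtype.val h

section LeftQuotient

variable {A : Type*}

theorem mem_leftQuot {u w : List A} {S : Set (List A)} : w ∈ leftQuot u S ↔ u ++ w ∈ S :=
  Iff.rfl

theorem leftQuot_append (u v : List A) (S : Set (List A)) :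
    leftQuot (u ++ v) S = leftQuot v (leftQuot u S) := by
  ext w
  simp [leftQuot, List.append_assoc]

theorem wpow_succ (p : List A) (n : ℕ) : wpow p (n + 1) = p ++ wpow p n := by
  simp [wpow, List.replicate_succ]

theorem leftQuot_wpow (p : List A) (n : ℕ) (S : Set (List A)) :
    leftQuot (wpow p n) S = (leftQuot p)^[n] S := by
  induction n generalizing S with
  | zero => ext; simp [wpow, leftQuot]
  | succ n ih => rw [Function.iterate_succ_apply, ← ih, wpow_succ, leftQuot_append]

theorem leftQuot_wpow_eq_of_leftQuot_eq {p : List A} {K G : Set (List A)}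
    (hK : leftQuot p K = G) (hG : leftQuot p G = G) {n : ℕ} (hn : 0 < n) :
    leftQuot (wpow p n) K = G := by
  obtain ⟨k, rfl⟩ := Nat.exists_eq_succ_of_ne_zero hn.ne'
  rw [leftQuot_wpow, Function.iterate_succ_apply, hK, Function.iterate_fixed hG]

theorem exists_wpow_leftQuot_idempotent (L : Set (List A))
    (hfin : {S : Set (List A) | ∃ u : List A, S = leftQuot u L}.Finite) (p : List A) :
    ∃ m : ℕ, 1 ≤ m ∧ ∀ s : List A,
      leftQuot (wpow p m) (leftQuot (wpow p m) (leftQuot s L)) =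
        leftQuot (wpow p m) (leftQuot s L) := by
  have hmaps :
      Set.MapsTo (leftQuot p) {S | ∃ u, S = leftQuot u L} {S | ∃ u, S = leftQuot u L} := by
    rintro _ ⟨u, rfl⟩
    exact ⟨u ++ p, (leftQuot_append u p L).symm⟩
  obtain ⟨m, hm, hidem⟩ := hmaps.exists_pos_iterate_idempotent hfin
  exact ⟨m, hm, fun s => by simpa only [leftQuot_wpow] using hidem _ ⟨s, rfl⟩⟩

theorem nonempty_of_ne_leftQuot {G : Set (List A)} {y : List A} (h : G ≠ leftQuot y G) :
    G.Nonempty :=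
  Set.nonempty_iff_ne_empty.2 (by rintro rfl; exact h rfl)

theorem ne_univ_of_ne_leftQuot {G : Set (List A)} {y : List A} (h : G ≠ leftQuot y G) :
    G ≠ Set.univ := by
  rintro rfl
  exact h rfl

theorem nil_mem_union_inter_leftQuot_iff {e u v w : List A} {K : Set (List A)} :
    [] ∈ leftQuot (e ++ u) K ∪ (leftQuot (e ++ v) K ∩ leftQuot w K) ↔
      e ++ u ∈ K ∨ (e ++ v ∈ K ∧ w ∈ K) := by
  simp [leftQuot]

theorem exists_union_inter_leftQuot_ne {K G : Set (List A)} {e : List A}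
    (he : leftQuot e K = G) (hKG : K ≠ G) (hne : G.Nonempty) (hnu : G ≠ Set.univ) :
    ∃ u v w : List A, leftQuot (e ++ u) K ∪ (leftQuot (e ++ v) K ∩ leftQuot w K) ≠
      leftQuot (e ++ u) K ∪ (leftQuot (e ++ w) K ∩ leftQuot v K) := by
  subst he
  obtain ⟨u, hu⟩ := (Set.ne_univ_iff_exists_notMem _).1 hnu
  obtain ⟨b, hb⟩ := hne
  obtain ⟨a, ha⟩ : ∃ a, ¬(a ∈ K ↔ a ∈ leftQuot e K) := by
    simpa only [ne_eq, Set.ext_iff, not_forall] using hKG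
  rw [mem_leftQuot] at hu hb ha
  obtain ⟨v, w, hvw⟩ : ∃ v w, ¬(e ++ v ∈ K ∧ w ∈ K ↔ e ++ w ∈ K ∧ v ∈ K) := by
    by_cases haK : a ∈ K
    · exact ⟨a, b, by tauto⟩
    · exact ⟨a, e ++ a, by tauto⟩
  refine ⟨u, v, w, fun h => hvw ?_⟩
  have := Set.ext_iff.1 h []
  simp only [nil_mem_union_inter_leftQuot_iff] at this
  tauto

end LeftQuotient

theorem forbidden_config_violates_identity {A : Type*} (L : Set (List A))
    (hfin : {S : Set (List A) | ∃ u : List A, S = leftQuot u L}.Finite)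
    (s t r x y : List A)
    (hfg : leftQuot s L ≠ leftQuot t L)
    (hgh : leftQuot t L ≠ leftQuot r L)
    (hfx : leftQuot x (leftQuot s L) = leftQuot t L)
    (hgx : leftQuot x (leftQuot t L) = leftQuot t L)
    (hgy : leftQuot y (leftQuot t L) = leftQuot r L) :
    ∃ (p u v w : List A) (m : ℕ), 1 ≤ m ∧
      (∀ s' : List A,
        leftQuot (wpow p m) (leftQuot (wpow p m) (leftQuot s' L)) =
          leftQuot (wpow p m) (leftQuot s' L)) ∧
      ∃ s' : List A,
        leftQuot (wpow p m ++ u) (leftQuot s' L) ∪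
          (leftQuot (wpow p m ++ v) (leftQuot s' L) ∩ leftQuot w (leftQuot s' L)) ≠
        leftQuot (wpow p m ++ u) (leftQuot s' L) ∪
          (leftQuot (wpow p m ++ w) (leftQuot s' L) ∩ leftQuot v (leftQuot s' L)) := by
  obtain ⟨m, hm, hidem⟩ := exists_wpow_leftQuot_idempotent L hfin x
  have hfe : leftQuot (wpow x m) (leftQuot s L) = leftQuot t L :=
    leftQuot_wpow_eq_of_leftQuot_eq hfx hgx hm
  have hgy' : leftQuot t L ≠ leftQuot y (leftQuot t L) := hgh.trans_eq hgy.symm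
  obtain ⟨u, v, w, hne⟩ := exists_union_inter_leftQuot_ne hfe hfg
    (nonempty_of_ne_leftQuot hgy') (ne_univ_of_ne_leftQuot hgy')
  exact ⟨x, u, v, w, m, hm, hidem, s, hne⟩
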